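/- Let k ∈ ℂ with k² ≠ conj(k)², and let y = (y₁,y₂)ᵀ, z ∈ ℂ² satisfy the row-vector equation ⟨y| + (⟨y|y⟩/(k−conj(k)))·⟨z| − (⟨y|σ₃|y⟩/(k+conj(k)))·⟨z|σ₃ = 0. If α⁻¹ := k|y₁|² + conj(k)|y₂|² ≠ 0, then z = ((k²−conj(k)²)/2)·diag(α, conj(α))·y. -/

import Mathlib

/-!
The scalars ⟨y|y⟩ and ⟨y|σ₃|y⟩ are real, so `a = ⟨y|y⟩/(k - k̄)` is purely imaginary and
`b = ⟨y|σ₃|y⟩/(k + k̄)` is real. Conjugating the two entries of the row equation therefore gives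
`y₁ = (a + b) z₁` and `y₂ = (a - b) z₂`, and partial fractions give
`a + b = 2α⁻¹/(k² - k̄²)` and `a - b = 2ᾱ⁻¹/(k² - k̄²)`.
-/

open Matrix Complex ComplexConjugate

noncomputable section

abbrev M2 := Matrix (Fin 2) (Fin 2) ℂ
abbrev Vec2 := Matrix (Fin 2) (Fin 1) ℂ

def sigma3 : M2 := !![1, 0; 0, -1]

/-- ⟨u|v⟩ = u†v -/
def braket (u v : Vec2) : ℂ := (uᴴ * v) 0 0

/-- ⟨u|M|v⟩ = u†Mv -/
def qform (u : Vec2) (M : M2) (v : Vec2) : ℂ := (uᴴ * M * v) 0 0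

section FieldIdentities

variable {F : Type*} [Field F] {k k' : F}

lemma sub_ne_zero_of_sq_ne_sq (h : k ^ 2 ≠ k' ^ 2) : k - k' ≠ 0 :=
  fun h0 => h (by linear_combination (k + k') * h0)

lemma add_ne_zero_of_sq_ne_sq (h : k ^ 2 ≠ k' ^ 2) : k + k' ≠ 0 :=
  fun h0 => h (by linear_combination (k - k') * h0)

lemma div_sub_add_div_add_of_sq_ne_sq (h : k ^ 2 ≠ k' ^ 2) (p q : F) :
    (p + q) / (k - k') + (p - q) / (k + k') = 2 * (k * p + k' * q) / (k ^ 2 - k' ^ 2) := by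
  have h₁ := sub_ne_zero_of_sq_ne_sq h
  have h₂ := add_ne_zero_of_sq_ne_sq h
  have h₃ : k ^ 2 - k' ^ 2 ≠ 0 := sub_ne_zero.mpr h
  field_simp
  ring

lemma div_sub_sub_div_add_of_sq_ne_sq (h : k ^ 2 ≠ k' ^ 2) (p q : F) :
    (p + q) / (k - k') - (p - q) / (k + k') = 2 * (k' * p + k * q) / (k ^ 2 - k' ^ 2) := by
  have h₁ := sub_ne_zero_of_sq_ne_sq h
  have h₂ := add_ne_zero_of_sq_ne_sq h
  have h₃ : k ^ 2 - k' ^ 2 ≠ 0 := sub_ne_zero.mpr h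
  field_simp
  ring

end FieldIdentities

lemma conj_ofReal_div_sub_conj (r : ℝ) (k : ℂ) :
    conj ((r : ℂ) / (k - conj k)) = -(r / (k - conj k)) := by
  rw [map_div₀, conj_ofReal, map_sub, conj_conj, ← neg_sub, div_neg]

lemma conj_ofReal_div_add_conj (r : ℝ) (k : ℂ) :
    conj ((r : ℂ) / (k + conj k)) = r / (k + conj k) := by
  rw [map_div₀, conj_ofReal, map_add, conj_conj, add_comm]

lemma braket_self (y : Vec2) : braket y y = (normSq (y 0 0) + normSq (y 1 0) : ℝ) := by
  simp [braket, Matrix.mul_apply, Fin.sum_univ_two, normSq_eq_conj_mul_self]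

lemma qform_sigma3_self (y : Vec2) :
    qform y sigma3 y = (normSq (y 0 0) - normSq (y 1 0) : ℝ) := by
  simp [qform, sigma3, Matrix.mul_apply, Fin.sum_univ_two, normSq_eq_conj_mul_self, sub_eq_add_neg]

section RowEquation

variable (y z : Vec2) (c₁ c₂ : ℂ)

lemma row_apply_zero :
    (yᴴ + c₁ • zᴴ - c₂ • (zᴴ * sigma3)) 0 0 = conj (y 0 0) + (c₁ - c₂) * conj (z 0 0) := by
  simp [sigma3, Matrix.mul_apply, Fin.sum_univ_two, sub_mul, add_sub_assoc]

lemma row_apply_one :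
    (yᴴ + c₁ • zᴴ - c₂ • (zᴴ * sigma3)) 0 1 = conj (y 1 0) + (c₁ + c₂) * conj (z 1 0) := by
  simp [sigma3, Matrix.mul_apply, Fin.sum_univ_two, add_mul, add_assoc]

end RowEquation

lemma eq_neg_conj_mul_of_conj_add_mul_conj_eq_zero {u v c : ℂ} (h : conj u + c * conj v = 0) :
    u = -conj c * v := by
  have := congrArg conj h
  rw [map_add, map_mul, conj_conj, conj_conj, map_zero] at this
  linear_combination this

lemma apply_eq_mul_of_row_equation {k : ℂ} {r s : ℝ} {y z : Vec2}
    (h : yᴴ + ((r : ℂ) / (k - conj k)) • zᴴ - ((s : ℂ) / (k + conj k)) • (zᴴ * sigma3) = 0) :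
    y 0 0 = (r / (k - conj k) + s / (k + conj k)) * z 0 0 ∧
      y 1 0 = (r / (k - conj k) - s / (k + conj k)) * z 1 0 := by
  constructor
  · rw [eq_neg_conj_mul_of_conj_add_mul_conj_eq_zero
      ((row_apply_zero y z _ _).symm.trans (congrFun (congrFun h 0) 0)),
      map_sub, conj_ofReal_div_sub_conj, conj_ofReal_div_add_conj]
    ring
  · rw [eq_neg_conj_mul_of_conj_add_mul_conj_eq_zero
      ((row_apply_one y z _ _).symm.trans (congrFun (congrFun h 0) 1)),
      map_add, conj_ofReal_div_sub_conj, conj_ofReal_div_add_conj]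
    ring

theorem z_of_row_equation (k : ℂ) (hk : k ^ 2 ≠ (conj k) ^ 2) (y z : Vec2)
    (hrow : yᴴ + (braket y y / (k - conj k)) • zᴴ
      - (qform y sigma3 y / (k + conj k)) • (zᴴ * sigma3) = 0)
    (α : ℂ)
    (hα : α⁻¹ = k * (Complex.normSq (y 0 0) : ℂ) + conj k * (Complex.normSq (y 1 0) : ℂ))
    (hne : k * (Complex.normSq (y 0 0) : ℂ) + conj k * (Complex.normSq (y 1 0) : ℂ) ≠ 0) :
    z = ((k ^ 2 - (conj k) ^ 2) / 2) • (!![α, 0; 0, conj α] * y) := by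
  rw [braket_self, qform_sigma3_self] at hrow
  obtain ⟨hy₀, hy₁⟩ := apply_eq_mul_of_row_equation hrow
  push_cast at hy₀ hy₁
  rw [div_sub_add_div_add_of_sq_ne_sq hk] at hy₀
  rw [div_sub_sub_div_add_of_sq_ne_sq hk] at hy₁
  have hconjα : conj α = (conj k * normSq (y 0 0) + k * normSq (y 1 0))⁻¹ := by
    rw [← inv_inv α, hα]; simp
  have hconjne : conj k * normSq (y 0 0) + k * normSq (y 1 0) ≠ 0 := by
    simpa using (map_ne_zero (starRingEnd ℂ)).mpr hne
  have hd : k ^ 2 - conj k ^ 2 ≠ 0 := sub_ne_zero.mpr hk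
  have hz₀ : z 0 0 = (k ^ 2 - conj k ^ 2) / 2 * (α * y 0 0) := by
    rw [hy₀, ← inv_inv α, hα]
    field_simp
  have hz₁ : z 1 0 = (k ^ 2 - conj k ^ 2) / 2 * (conj α * y 1 0) := by
    rw [hy₁, hconjα]
    field_simp
  ext i j
  fin_cases i <;> fin_cases j
  · simpa [Matrix.vecMul, dotProduct, Fin.sum_univ_two] using hz₀
  · simpa [Matrix.vecMul, dotProduct, Fin.sum_univ_two] using hz₁
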